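/- Let α, γ > 0 and β ∈ ℝ with Q := β/√(αγ) satisfying Q > 3. Then for all ξ, η ∈ ℝ², Re A(ξ + iη) ≥ -(Q² - 1) A(η), where A(z) = α z₁⁴ + 2β z₁² z₂² + γ z₂⁴. -/

import Mathlib

/-!
Write `α = a²`, `γ = g²` and `β = Q a g` with `a = √α`, `g = √γ`. Then
`2Q (Re A(ξ + iη) + (Q² - 1) A(η))` is an explicit combination of squares and of the products
`a ξ₁² · g ξ₂²`, `a η₁² · g η₂²`, whose coefficients `Q + 3`, `Q - 3`, `(Q - 3)(Q + 1)`, `Q` are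
nonnegative as soon as `Q ≥ 3`.
-/

open Complex

def quartic {R : Type*} [CommRing R] (α β γ z₁ z₂ : R) : R :=
  α * z₁ ^ 4 + 2 * β * z₁ ^ 2 * z₂ ^ 2 + γ * z₂ ^ 4

lemma re_quartic (α β γ ξ₁ ξ₂ η₁ η₂ : ℝ) :
    (quartic (α : ℂ) β γ (ξ₁ + η₁ * I) (ξ₂ + η₂ * I)).re =
      α * (ξ₁ ^ 4 - 6 * ξ₁ ^ 2 * η₁ ^ 2 + η₁ ^ 4)
        + 2 * β * ((ξ₁ ^ 2 - η₁ ^ 2) * (ξ₂ ^ 2 - η₂ ^ 2) - 4 * ξ₁ * η₁ * ξ₂ * η₂)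
        + γ * (ξ₂ ^ 4 - 6 * ξ₂ ^ 2 * η₂ ^ 2 + η₂ ^ 4) := by
  simp only [quartic, pow_succ, pow_zero, one_mul, add_re, add_im, mul_re, mul_im, ofReal_re,
    ofReal_im, I_re, I_im, re_ofNat, im_ofNat]
  ring

lemma two_mul_re_quartic_add_eq (a g Q ξ₁ ξ₂ η₁ η₂ : ℝ) :
    2 * Q * ((quartic ((a ^ 2 : ℝ) : ℂ) (Q * a * g : ℝ) (g ^ 2 : ℝ)
          (ξ₁ + η₁ * I) (ξ₂ + η₂ * I)).re
        + (Q ^ 2 - 1) * quartic (a ^ 2) (Q * a * g) (g ^ 2) η₁ η₂)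
      = (Q + 3) * (a * ξ₁ ^ 2 + g * ξ₂ ^ 2 - Q * (a * η₁ ^ 2 + g * η₂ ^ 2)) ^ 2
        + (Q - 3) * (a * ξ₁ ^ 2 - g * ξ₂ ^ 2 + Q * (a * η₁ ^ 2 - g * η₂ ^ 2)) ^ 2
        + 4 * (Q - 3) * (Q + 1) * ((a * ξ₁ ^ 2) * (g * ξ₂ ^ 2))
        + 4 * Q ^ 2 * (Q - 3) * (Q + 1) * ((a * η₁ ^ 2) * (g * η₂ ^ 2))
        + 8 * Q * (a * g) * (ξ₁ * ξ₂ - Q * (η₁ * η₂)) ^ 2 := by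
  rw [re_quartic, quartic]
  ring

lemma re_quartic_add_nonneg {a g Q : ℝ} (ha : 0 ≤ a) (hg : 0 ≤ g) (hQ : 3 ≤ Q)
    (ξ₁ ξ₂ η₁ η₂ : ℝ) :
    0 ≤ (quartic ((a ^ 2 : ℝ) : ℂ) (Q * a * g : ℝ) (g ^ 2 : ℝ) (ξ₁ + η₁ * I) (ξ₂ + η₂ * I)).re
      + (Q ^ 2 - 1) * quartic (a ^ 2) (Q * a * g) (g ^ 2) η₁ η₂ := by
  have hQ0 : 0 ≤ Q := by linarith
  have hQ3 : 0 ≤ Q - 3 := by linarith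
  have hQ1 : 0 ≤ Q + 1 := by linarith
  refine (mul_nonneg_iff_of_pos_left (by linarith : (0 : ℝ) < 2 * Q)).mp ?_
  rw [two_mul_re_quartic_add_eq]
  positivity

theorem stmt2 (α β γ : ℝ) (hα : 0 < α) (hγ : 0 < γ)
    (hQ : 3 < β / Real.sqrt (α * γ))
    (ξ1 ξ2 η1 η2 : ℝ) :
    ((α : ℂ) * (ξ1 + η1 * I) ^ 4 + 2 * β * (ξ1 + η1 * I) ^ 2 * (ξ2 + η2 * I) ^ 2
        + γ * (ξ2 + η2 * I) ^ 4).re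
      ≥ -((β / Real.sqrt (α * γ)) ^ 2 - 1)
          * (α * η1 ^ 4 + 2 * β * η1 ^ 2 * η2 ^ 2 + γ * η2 ^ 4) := by
  set Q := β / Real.sqrt (α * γ)
  have hβ : β = Q * Real.sqrt α * Real.sqrt γ := by
    rw [mul_assoc, ← Real.sqrt_mul hα.le,
      div_mul_cancel₀ β (Real.sqrt_pos.2 (mul_pos hα hγ)).ne']
  have key := re_quartic_add_nonneg (Real.sqrt_nonneg α) (Real.sqrt_nonneg γ) hQ.le ξ1 ξ2 η1 η2
  rw [← hβ, Real.sq_sqrt hα.le, Real.sq_sqrt hγ.le] at key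
  simp only [quartic] at key
  linarith
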